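/- arXiv:1503.02216 — 2 statements merged into one kernel-verified Lean document; each statement's English description precedes it below -/
import Mathlib

section
/- Fix an index set Ω of entries and define F(W) = (1/2) ∑_{i∈Ω} (W_i − B_i)² for W in a finite-dimensional real vector space indexed by coordinates. If at each step one chooses a direction S^(k) with ‖S^(k)‖ ≤ 1 (in the Frobenius/Euclidean norm) satisfying ⟨∇F(W^(k)), S^(k)⟩ ≥ c ‖∇F(W^(k))‖ for c ∈ (0,1], and sets W^(k+1) = W^(k) + ᾱ S^(k) with ᾱ minimizing α ↦ F(W^(k) + α S^(k)), then F(W^(k+1)) ≤ (1 − c²) F(W^(k)). -/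
open scoped BigOperators

/-- Least-squares completion objective restricted to observed entries `Ω`. -/
noncomputable def lsObj {n : ℕ} (Ω : Finset (Fin n)) (B W : EuclideanSpace ℝ (Fin n)) : ℝ :=
  (1 / 2) * ∑ i ∈ Ω, (W i - B i) ^ 2

/-- Its gradient: `W_i - B_i` on `Ω`, zero elsewhere. -/
noncomputable def lsGrad {n : ℕ} (Ω : Finset (Fin n)) (B W : EuclideanSpace ℝ (Fin n)) :
    EuclideanSpace ℝ (Fin n) :=
  WithLp.toLp 2 (fun i => if i ∈ Ω then W i - B i else 0)


/-! `F` is quadratic and its Hessian, the coordinate projection onto `Ω`, has norm at most `1`, so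
`F(W + αS) ≤ F(W) + α⟪∇F(W), S⟫ + α²/2` when `‖S‖ ≤ 1`. The step `α = -⟪∇F(W), S⟫` therefore decreases
`F` by `⟪∇F(W), S⟫²/2 ≥ c²‖∇F(W)‖²/2 = c² F(W)`, and the exact line search does at least as well. -/

namespace LeastSquares

variable {n : ℕ} (Ω : Finset (Fin n)) (B : EuclideanSpace ℝ (Fin n))

theorem inner_lsGrad (W v : EuclideanSpace ℝ (Fin n)) :
    inner ℝ (lsGrad Ω B W) v = ∑ i ∈ Ω, (W i - B i) * v i := by
  simp only [lsGrad, PiLp.inner_apply, RCLike.inner_apply, conj_trivial, mul_comm, ite_mul,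
    zero_mul, Finset.sum_ite_mem, Finset.univ_inter]

theorem lsObj_eq_half_norm_lsGrad_sq (W : EuclideanSpace ℝ (Fin n)) :
    lsObj Ω B W = ‖lsGrad Ω B W‖ ^ 2 / 2 := by
  have hgrad : ∀ i ∈ Ω, lsGrad Ω B W i = W i - B i := fun i hi => by simp [lsGrad, hi]
  have hsum : ∑ i ∈ Ω, (W i - B i) * lsGrad Ω B W i = ∑ i ∈ Ω, (W i - B i) ^ 2 :=
    Finset.sum_congr rfl fun i hi => by rw [hgrad i hi, sq]
  rw [← real_inner_self_eq_norm_sq, inner_lsGrad, hsum, lsObj]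
  ring

theorem lsObj_le_half_norm_sub_sq (W : EuclideanSpace ℝ (Fin n)) :
    lsObj Ω B W ≤ ‖W - B‖ ^ 2 / 2 := by
  rw [lsObj, EuclideanSpace.norm_sq_eq]
  have hsub : ∑ i ∈ Ω, (W i - B i) ^ 2 ≤ ∑ i, ‖(W - B) i‖ ^ 2 := by
    simp only [PiLp.sub_apply, Real.norm_eq_abs, sq_abs]
    exact Finset.sum_le_univ_sum_of_nonneg fun i => sq_nonneg _
  linarith

theorem lsObj_add (W v : EuclideanSpace ℝ (Fin n)) :
    lsObj Ω B (W + v) = lsObj Ω B W + inner ℝ (lsGrad Ω B W) v + lsObj Ω 0 v := by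
  simp only [lsObj, inner_lsGrad, PiLp.add_apply, PiLp.zero_apply, sub_zero]
  rw [Finset.sum_congr rfl fun i _ =>
    show (W i + v i - B i) ^ 2 = (W i - B i) ^ 2 + 2 * ((W i - B i) * v i) + v i ^ 2 by ring]
  rw [Finset.sum_add_distrib, Finset.sum_add_distrib, ← Finset.mul_sum]
  ring

theorem lsObj_add_smul_le (W S : EuclideanSpace ℝ (Fin n)) (hS : ‖S‖ ≤ 1) (α : ℝ) :
    lsObj Ω B (W + α • S) ≤ lsObj Ω B W + α * inner ℝ (lsGrad Ω B W) S + α ^ 2 / 2 := by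
  have hquad : lsObj Ω 0 (α • S) ≤ α ^ 2 / 2 := by
    have hnorm : ‖α • S‖ ^ 2 ≤ α ^ 2 := by
      rw [norm_smul, mul_pow, Real.norm_eq_abs, sq_abs]
      exact mul_le_of_le_one_right (sq_nonneg α) (pow_le_one₀ (norm_nonneg S) hS)
    have hle := lsObj_le_half_norm_sub_sq Ω 0 (α • S)
    rw [sub_zero] at hle
    linarith
  rw [lsObj_add, inner_smul_right]
  linarith

end LeastSquares

open LeastSquares in
theorem stmt_5_general {n : ℕ} (Ω : Finset (Fin n)) (B : EuclideanSpace ℝ (Fin n))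
    (c : ℝ) (hc0 : 0 < c)
    (W S : EuclideanSpace ℝ (Fin n)) (hS : ‖S‖ ≤ 1)
    (hsel : (inner ℝ (lsGrad Ω B W) S : ℝ) ≥ c * ‖lsGrad Ω B W‖)
    (α' : ℝ) (hopt : ∀ α : ℝ, lsObj Ω B (W + α' • S) ≤ lsObj Ω B (W + α • S)) :
    lsObj Ω B (W + α' • S) ≤ (1 - c ^ 2) * lsObj Ω B W := by
  set b := inner ℝ (lsGrad Ω B W) S
  have hstep := lsObj_add_smul_le Ω B W S hS (-b)
  have hb_sq : c ^ 2 * ‖lsGrad Ω B W‖ ^ 2 ≤ b ^ 2 := by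
    rw [← mul_pow]
    exact pow_le_pow_left₀ (by positivity) hsel 2
  have hF := lsObj_eq_half_norm_lsGrad_sq Ω B W
  calc lsObj Ω B (W + α' • S) ≤ lsObj Ω B (W + (-b) • S) := hopt (-b)
    _ ≤ lsObj Ω B W - b ^ 2 / 2 := by linarith
    _ ≤ (1 - c ^ 2) * lsObj Ω B W := by nlinarith

theorem stmt_5 {n : ℕ} (Ω : Finset (Fin n)) (B : EuclideanSpace ℝ (Fin n))
    (c : ℝ) (hc0 : 0 < c) (hc1 : c ≤ 1)
    (W S : EuclideanSpace ℝ (Fin n)) (hS : ‖S‖ ≤ 1)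
    (hsel : (inner ℝ (lsGrad Ω B W) S : ℝ) ≥ c * ‖lsGrad Ω B W‖)
    (α' : ℝ) (hopt : ∀ α : ℝ, lsObj Ω B (W + α' • S) ≤ lsObj Ω B (W + α • S)) :
    lsObj Ω B (W + α' • S) ≤ (1 - c ^ 2) * lsObj Ω B W :=
  stmt_5_general Ω B c hc0 W S hS hsel α' hopt
end

section
/- For a 4th-order tensor A with all mode dimensions equal to n, if x₁,…,x₄ are the unit vectors produced by the recursive spectral approximation (with exact leading singular vector computations at each step, i.e., all α_{(k)} = 1), then ⟨A, x₁⊗x₂⊗x₃⊗x₄⟩ ≥ ‖A_{(1,2)}‖₂ / n ≥ ‖A‖₂ / n, where A_{(1,2)} is the n²×n² mode-(1,2) unfolding and ‖A‖₂ = max_{‖x_i‖=1} ⟨A, x₁⊗x₂⊗x₃⊗x₄⟩. -/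
open scoped BigOperators

/-- `⟨A, x₁ ⊗ x₂ ⊗ x₃ ⊗ x₄⟩` for a fourth-order tensor. -/
def val4 {n : ℕ} (A : Fin n → Fin n → Fin n → Fin n → ℝ)
    (x₁ x₂ x₃ x₄ : Fin n → ℝ) : ℝ :=
  ∑ i, ∑ j, ∑ k, ∑ l, A i j k l * x₁ i * x₂ j * x₃ k * x₄ l

/-!
Write `M = A ×₁ x₁ᵀ ×₂ x₂ᵀ`, `s = x₁ᵀ u x₂ = ‖u‖₂` and `τ = ⟨M, x₃ ⊗ x₄⟩ = ‖M‖₂`. The spectral norm of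
a matrix bounds the norm of each of its rows, so `‖M‖_F² ≤ n τ²` and `1 = ‖u‖_F² ≤ n s²`.
Contracting `A_{(1,2)} v = σ u` with `x₁ ⊗ x₂` gives `⟨M, v⟩ = σ s`, and Cauchy–Schwarz yields
`σ² ≤ n σ² s² = n ⟨M, v⟩² ≤ n ‖M‖_F² ≤ n² τ²`.
The bound `‖A‖₂ ≤ σ` holds because `y₁ ⊗ y₂` and `y₃ ⊗ y₄` are unit vectors when the `yᵢ` are.
-/

open Finset

theorem IsGreatest.nonneg_of_neg_mem {S : Set ℝ} {a : ℝ} (h : IsGreatest S a)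
    (hS : ∀ x ∈ S, -x ∈ S) : 0 ≤ a := by
  linarith [h.2 (hS a h.1)]

section Bilinear

variable {ι κ : Type*} [Fintype ι] [Fintype κ]

lemma sum_sum_mul_sq (a : ι → ℝ) (b : κ → ℝ) :
    ∑ i, ∑ j, (a i * b j) ^ 2 = (∑ i, a i ^ 2) * ∑ j, b j ^ 2 := by
  simp only [mul_pow, sum_mul_sum]

lemma sum_sum_mul_sq_le_sq_mul_sq (M V : ι → κ → ℝ) :
    (∑ i, ∑ j, M i j * V i j) ^ 2 ≤ (∑ i, ∑ j, M i j ^ 2) * ∑ i, ∑ j, V i j ^ 2 := by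
  simpa only [Fintype.sum_prod_type] using
    sum_mul_sq_le_sq_mul_sq univ (fun p : ι × κ => M p.1 p.2) (fun p => V p.1 p.2)

def unitBilinValues (M : ι → κ → ℝ) : Set ℝ :=
  {w | ∃ (a : ι → ℝ) (b : κ → ℝ), (∑ i, a i ^ 2) = 1 ∧ (∑ j, b j ^ 2) = 1 ∧
    w = ∑ i, ∑ j, M i j * a i * b j}

lemma neg_mem_unitBilinValues {M : ι → κ → ℝ} {w : ℝ} (hw : w ∈ unitBilinValues M) :
    -w ∈ unitBilinValues M := by
  obtain ⟨a, b, ha, hb, rfl⟩ := hw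
  exact ⟨-a, b, by simpa using ha, hb, by simp [sum_neg_distrib]⟩

lemma sum_sq_row_le_sq {M : ι → κ → ℝ} {τ : ℝ} (hτ : τ ∈ upperBounds (unitBilinValues M))
    (i : ι) : ∑ j, M i j ^ 2 ≤ τ ^ 2 := by
  classical
  obtain ⟨r, hr0, hr2⟩ : ∃ r, 0 ≤ r ∧ r ^ 2 = ∑ j, M i j ^ 2 :=
    ⟨_, Real.sqrt_nonneg _, Real.sq_sqrt (sum_nonneg fun _ _ => sq_nonneg _)⟩
  rw [← hr2]
  rcases hr0.eq_or_lt with rfl | hr0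
  · simpa using sq_nonneg τ
  · have hrτ : r ≤ τ := by
      refine hτ ⟨Pi.single i 1, fun j => M i j / r, by simp [Pi.single_apply], ?_, ?_⟩
      · simp only [div_pow, ← sum_div, ← hr2]
        exact div_self (by positivity)
      · simp only [Pi.single_apply, mul_ite, mul_one, mul_zero, ite_mul, zero_mul, sum_ite_irrel,
          sum_const_zero, sum_ite_eq', mem_univ, ↓reduceIte]
        field_simp
        rw [← sum_div, ← hr2, sq, mul_div_cancel_right₀ r hr0.ne']
    exact pow_le_pow_left₀ hr0.le hrτ 2

lemma sum_sum_sq_le_card_mul_sq {M : ι → κ → ℝ} {τ : ℝ}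
    (hτ : τ ∈ upperBounds (unitBilinValues M)) :
    ∑ i, ∑ j, M i j ^ 2 ≤ Fintype.card ι * τ ^ 2 := by
  simpa using sum_le_sum fun i (_ : i ∈ univ) => sum_sq_row_le_sq hτ i

end Bilinear

section Unfolding

variable {ι₁ ι₂ κ₁ κ₂ : Type*} [Fintype ι₁] [Fintype ι₂] [Fintype κ₁] [Fintype κ₂]

lemma sum_sum_sum_sum_comm (f : ι₁ → ι₂ → κ₁ → κ₂ → ℝ) :
    ∑ k, ∑ l, ∑ i, ∑ j, f i j k l = ∑ i, ∑ j, ∑ k, ∑ l, f i j k l := by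
  calc ∑ k, ∑ l, ∑ i, ∑ j, f i j k l = ∑ k, ∑ i, ∑ l, ∑ j, f i j k l :=
        sum_congr rfl fun _ _ => sum_comm
    _ = ∑ i, ∑ k, ∑ j, ∑ l, f i j k l := by
        rw [sum_comm]
        exact sum_congr rfl fun _ _ => sum_congr rfl fun _ _ => sum_comm
    _ = ∑ i, ∑ j, ∑ k, ∑ l, f i j k l := sum_congr rfl fun _ _ => sum_comm

def unfoldingValues (A : ι₁ → ι₂ → κ₁ → κ₂ → ℝ) : Set ℝ :=
  {w | ∃ (U : ι₁ → ι₂ → ℝ) (V : κ₁ → κ₂ → ℝ),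
    (∑ i, ∑ j, U i j ^ 2) = 1 ∧ (∑ k, ∑ l, V k l ^ 2) = 1 ∧
    w = ∑ i, ∑ j, ∑ k, ∑ l, A i j k l * U i j * V k l}

lemma neg_mem_unfoldingValues {A : ι₁ → ι₂ → κ₁ → κ₂ → ℝ} {w : ℝ}
    (hw : w ∈ unfoldingValues A) : -w ∈ unfoldingValues A := by
  obtain ⟨U, V, hU, hV, rfl⟩ := hw
  exact ⟨-U, V, by simpa using hU, hV, by simp [sum_neg_distrib]⟩

lemma sum_sum_contract_mul_comm (A : ι₁ → ι₂ → κ₁ → κ₂ → ℝ) (x₁ : ι₁ → ℝ) (x₂ : ι₂ → ℝ)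
    (v : κ₁ → κ₂ → ℝ) :
    ∑ k, ∑ l, (∑ i, ∑ j, A i j k l * x₁ i * x₂ j) * v k l =
      ∑ i, ∑ j, (∑ k, ∑ l, A i j k l * v k l) * x₁ i * x₂ j := by
  simp only [sum_mul]
  rw [sum_sum_sum_sum_comm]
  simp only [mul_comm, mul_left_comm]

end Unfolding

lemma val4_eq_sum_sum {n : ℕ} (A : Fin n → Fin n → Fin n → Fin n → ℝ) (x₁ x₂ x₃ x₄ : Fin n → ℝ) :
    val4 A x₁ x₂ x₃ x₄ = ∑ k, ∑ l, (∑ i, ∑ j, A i j k l * x₁ i * x₂ j) * x₃ k * x₄ l := by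
  simp only [val4, sum_mul]
  rw [sum_sum_sum_sum_comm]

lemma val4_mem_unfoldingValues {n : ℕ} (A : Fin n → Fin n → Fin n → Fin n → ℝ)
    {y₁ y₂ y₃ y₄ : Fin n → ℝ} (h₁ : ∑ i, y₁ i ^ 2 = 1) (h₂ : ∑ j, y₂ j ^ 2 = 1)
    (h₃ : ∑ k, y₃ k ^ 2 = 1) (h₄ : ∑ l, y₄ l ^ 2 = 1) :
    val4 A y₁ y₂ y₃ y₄ ∈ unfoldingValues A := by
  refine ⟨fun i j => y₁ i * y₂ j, fun k l => y₃ k * y₄ l, ?_, ?_, ?_⟩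
  · rw [sum_sum_mul_sq, h₁, h₂, one_mul]
  · rw [sum_sum_mul_sq, h₃, h₄, one_mul]
  · simp only [val4, mul_assoc]

theorem stmt_17_general {n : ℕ} (A : Fin n → Fin n → Fin n → Fin n → ℝ)
    (σ : ℝ) (u v : Fin n → Fin n → ℝ) (x₁ x₂ x₃ x₄ : Fin n → ℝ)
    -- σ is the spectral norm of the mode-(1,2) unfolding `A_{(1,2)}` ...
    (hσmax : IsGreatest {w : ℝ | ∃ U V : Fin n → Fin n → ℝ,
        (∑ i, ∑ j, U i j ^ 2) = 1 ∧ (∑ k, ∑ l, V k l ^ 2) = 1 ∧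
        w = ∑ i, ∑ j, ∑ k, ∑ l, A i j k l * U i j * V k l} σ)
    -- ... with leading singular vector pair (u, v): `A_{(1,2)} v = σ u`
    (hu : (∑ i, ∑ j, u i j ^ 2) = 1) (hv : (∑ k, ∑ l, v k l ^ 2) = 1)
    (hAv : ∀ i j, (∑ k, ∑ l, A i j k l * v k l) = σ * u i j)
    -- (x₁, x₂) is the leading singular vector pair of the folded matrix u
    (hx₁₂ : IsGreatest {w : ℝ | ∃ a b : Fin n → ℝ,
        (∑ i, a i ^ 2) = 1 ∧ (∑ j, b j ^ 2) = 1 ∧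
        w = ∑ i, ∑ j, u i j * a i * b j} (∑ i, ∑ j, u i j * x₁ i * x₂ j))
    -- (x₃, x₄) is the leading singular vector pair of `A ×₁ x₁ᵀ ×₂ x₂ᵀ`
    (hx₃₄ : IsGreatest {w : ℝ | ∃ a b : Fin n → ℝ,
        (∑ k, a k ^ 2) = 1 ∧ (∑ l, b l ^ 2) = 1 ∧
        w = ∑ k, ∑ l, (∑ i, ∑ j, A i j k l * x₁ i * x₂ j) * a k * b l}
        (∑ k, ∑ l, (∑ i, ∑ j, A i j k l * x₁ i * x₂ j) * x₃ k * x₄ l)) :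
    val4 A x₁ x₂ x₃ x₄ ≥ σ / n ∧
    σ ≥ sSup {w : ℝ | ∃ y₁ y₂ y₃ y₄ : Fin n → ℝ,
        (∑ i, y₁ i ^ 2) = 1 ∧ (∑ j, y₂ j ^ 2) = 1 ∧
        (∑ k, y₃ k ^ 2) = 1 ∧ (∑ l, y₄ l ^ 2) = 1 ∧
        w = val4 A y₁ y₂ y₃ y₄} := by
  set M : Fin n → Fin n → ℝ := fun k l => ∑ i, ∑ j, A i j k l * x₁ i * x₂ j
  set s := ∑ i, ∑ j, u i j * x₁ i * x₂ j
  set τ := ∑ k, ∑ l, M k l * x₃ k * x₄ l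
  have hσA : IsGreatest (unfoldingValues A) σ := hσmax
  have hus : IsGreatest (unitBilinValues u) s := hx₁₂
  have hMτ : IsGreatest (unitBilinValues M) τ := hx₃₄
  have hn : (0 : ℝ) < n := Nat.cast_pos.2 (Nat.pos_of_ne_zero (by rintro rfl; simp at hu))
  have hσ0 : 0 ≤ σ := hσA.nonneg_of_neg_mem fun _ => neg_mem_unfoldingValues
  have hτ0 : 0 ≤ τ := hMτ.nonneg_of_neg_mem fun _ => neg_mem_unitBilinValues
  have hs : 1 ≤ n * s ^ 2 := by simpa [hu] using sum_sum_sq_le_card_mul_sq hus.2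
  have hM : ∑ k, ∑ l, M k l ^ 2 ≤ n * τ ^ 2 := by simpa using sum_sum_sq_le_card_mul_sq hMτ.2
  have hMv : ∑ k, ∑ l, M k l * v k l = σ * s := by
    rw [sum_sum_contract_mul_comm]
    simp only [hAv, s, mul_sum, mul_assoc]
  have hσ : σ ≤ n * τ := by
    refine le_of_sq_le_sq ?_ (by positivity)
    calc σ ^ 2 ≤ σ ^ 2 * (n * s ^ 2) := le_mul_of_one_le_right (sq_nonneg σ) hs
      _ = n * (∑ k, ∑ l, M k l * v k l) ^ 2 := by rw [hMv]; ring
      _ ≤ n * ((∑ k, ∑ l, M k l ^ 2) * ∑ k, ∑ l, v k l ^ 2) := by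
          gcongr
          exact sum_sum_mul_sq_le_sq_mul_sq M v
      _ ≤ n * (n * τ ^ 2) := by rw [hv, mul_one]; gcongr
      _ = (n * τ) ^ 2 := by ring
  refine ⟨?_, Real.sSup_le ?_ hσ0⟩
  · rw [val4_eq_sum_sum, ge_iff_le, div_le_iff₀ hn]
    linarith
  · rintro _ ⟨y₁, y₂, y₃, y₄, h₁, h₂, h₃, h₄, rfl⟩
    exact hσA.2 (val4_mem_unfoldingValues A h₁ h₂ h₃ h₄)

theorem stmt_17 {n : ℕ} (hn : 0 < n) (A : Fin n → Fin n → Fin n → Fin n → ℝ)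
    (σ : ℝ) (u v : Fin n → Fin n → ℝ) (x₁ x₂ x₃ x₄ : Fin n → ℝ)
    -- σ is the spectral norm of the mode-(1,2) unfolding `A_{(1,2)}` ...
    (hσmax : IsGreatest {w : ℝ | ∃ U V : Fin n → Fin n → ℝ,
        (∑ i, ∑ j, U i j ^ 2) = 1 ∧ (∑ k, ∑ l, V k l ^ 2) = 1 ∧
        w = ∑ i, ∑ j, ∑ k, ∑ l, A i j k l * U i j * V k l} σ)
    -- ... with leading singular vector pair (u, v): `A_{(1,2)} v = σ u`
    (hu : (∑ i, ∑ j, u i j ^ 2) = 1) (hv : (∑ k, ∑ l, v k l ^ 2) = 1)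
    (hAv : ∀ i j, (∑ k, ∑ l, A i j k l * v k l) = σ * u i j)
    -- (x₁, x₂) is the leading singular vector pair of the folded matrix u
    (hx₁ : (∑ i, x₁ i ^ 2) = 1) (hx₂ : (∑ j, x₂ j ^ 2) = 1)
    (hx₁₂ : IsGreatest {w : ℝ | ∃ a b : Fin n → ℝ,
        (∑ i, a i ^ 2) = 1 ∧ (∑ j, b j ^ 2) = 1 ∧
        w = ∑ i, ∑ j, u i j * a i * b j} (∑ i, ∑ j, u i j * x₁ i * x₂ j))
    -- (x₃, x₄) is the leading singular vector pair of `A ×₁ x₁ᵀ ×₂ x₂ᵀ`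
    (hx₃ : (∑ k, x₃ k ^ 2) = 1) (hx₄ : (∑ l, x₄ l ^ 2) = 1)
    (hx₃₄ : IsGreatest {w : ℝ | ∃ a b : Fin n → ℝ,
        (∑ k, a k ^ 2) = 1 ∧ (∑ l, b l ^ 2) = 1 ∧
        w = ∑ k, ∑ l, (∑ i, ∑ j, A i j k l * x₁ i * x₂ j) * a k * b l}
        (∑ k, ∑ l, (∑ i, ∑ j, A i j k l * x₁ i * x₂ j) * x₃ k * x₄ l)) :
    val4 A x₁ x₂ x₃ x₄ ≥ σ / n ∧
    σ ≥ sSup {w : ℝ | ∃ y₁ y₂ y₃ y₄ : Fin n → ℝ,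
        (∑ i, y₁ i ^ 2) = 1 ∧ (∑ j, y₂ j ^ 2) = 1 ∧
        (∑ k, y₃ k ^ 2) = 1 ∧ (∑ l, y₄ l ^ 2) = 1 ∧
        w = val4 A y₁ y₂ y₃ y₄} :=
  stmt_17_general A σ u v x₁ x₂ x₃ x₄ hσmax hu hv hAv hx₁₂ hx₃₄
end
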